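/- Let x_1,…,x_n ∈ ℝ^p and μ_1,…,μ_K ∈ ℝ^p with x_j ≠ μ_k for all j,k, let β > 0, and define the soft cluster assignments r_{jk} = exp(−β‖x_j − μ_k‖)/∑_{ℓ=1}^K exp(−β‖x_j − μ_ℓ‖) (Euclidean norm) and the map f : ℝ^{K·p} → ℝ^{K·p} with components f_{i,ℓ}(μ) = μ_i^ℓ − (∑_{j=1}^n r_{ji} x_j^ℓ)/(∑_{j=1}^n r_{ji}). Suppose ‖x_j‖_1 ≤ 1 for all j; for every point j, ‖x_j − μ_i‖ − ‖x_j − μ_{c(j)}‖ ≥ δ for all i ≠ c(j), where c(j) = argmax_i r_{ji}; and for every cluster i, ∑_{j=1}^n r_{ji} ≥ αn. Then the off-diagonal part A = ∂f/∂μ − I of the Jacobian satisfies ‖A‖_1 ≤ 2K²β·exp(−βδ)/α, where ‖·‖_1 denotes the operator norm induced by the ℓ1 vector norm. -/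

import Mathlib

open Real Finset

-- quotient rule for HasFDerivAt, real-valued on a normed space
theorem myDiv {E : Type*} [NormedAddCommGroup E] [NormedSpace ℝ E]
    {c d : E → ℝ} {c' d' : E →L[ℝ] ℝ} {x : E}
    (hc : HasFDerivAt c c' x) (hd : HasFDerivAt d d' x) (hx : d x ≠ 0) :
    HasFDerivAt (fun y => c y / d y) ((d x)⁻¹ • c' - (c x / d x ^ 2) • d') x := by
  have hinv : HasFDerivAt (fun y => (d y)⁻¹) ((-(d x ^ 2)⁻¹) • d') x := by
    exact (hasDerivAt_inv hx).comp_hasFDerivAt x hd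
  have := hc.mul hinv
  have heq : (fun y => c y / d y) = fun y => c y * (d y)⁻¹ := by
    funext y; rw [div_eq_mul_inv]
  rw [heq]
  refine this.congr_fderiv ?_
  ext z
  simp only [ContinuousLinearMap.sub_apply, ContinuousLinearMap.smul_apply,
    ContinuousLinearMap.add_apply, smul_eq_mul]
  field_simp
  ring

-- derivative of the norm at a nonzero point of a real inner product space
theorem myNorm {F : Type*} [NormedAddCommGroup F] [InnerProductSpace ℝ F]
    {y : F} (hy : y ≠ 0) :
    HasFDerivAt (fun z : F => ‖z‖) (‖y‖⁻¹ • innerSL ℝ y) y := by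
  have h2 : HasFDerivAt (fun z : F => ‖z‖ ^ 2) (2 • (innerSL ℝ y)) y := by
    simpa using (hasFDerivAt_id y).norm_sq
  have hq : (‖y‖ : ℝ) ^ 2 ≠ 0 := pow_ne_zero 2 (norm_ne_zero_iff.2 hy)
  have h3 := (Real.hasDerivAt_sqrt hq).comp_hasFDerivAt y h2
  have heq : (fun z : F => Real.sqrt (‖z‖ ^ 2)) = fun z : F => ‖z‖ := by
    funext z; rw [Real.sqrt_sq (norm_nonneg z)]
  rw [show ((fun x => Real.sqrt x) ∘ fun z : F => ‖z‖ ^ 2) = fun z : F => ‖z‖ from heq] at h3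
  refine h3.congr_fderiv ?_
  ext z
  rw [Real.sqrt_sq (norm_nonneg y)]
  simp only [ContinuousLinearMap.smul_apply, two_smul, ContinuousLinearMap.add_apply,
    smul_eq_mul]
  field_simp
  ring

theorem myExpNorm {K p : ℕ} (β : ℝ) (a : EuclideanSpace ℝ (Fin p))
    (μ : Fin K → EuclideanSpace ℝ (Fin p)) (i : Fin K) (ha : a ≠ μ i) :
    HasFDerivAt (fun μ' : Fin K → EuclideanSpace ℝ (Fin p) => Real.exp (-β * ‖a - μ' i‖))
      ((β * Real.exp (-β * ‖a - μ i‖) / ‖a - μ i‖) •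
        ((innerSL ℝ (a - μ i)).comp (ContinuousLinearMap.proj i))) μ := by
  set P : (Fin K → EuclideanSpace ℝ (Fin p)) →L[ℝ] EuclideanSpace ℝ (Fin p) :=
    ContinuousLinearMap.proj i with hP
  have h1 : HasFDerivAt (fun μ' : Fin K → EuclideanSpace ℝ (Fin p) => a - μ' i)
      (0 - P) μ :=
    (hasFDerivAt_const a μ).sub P.hasFDerivAt
  have hne : a - μ i ≠ 0 := sub_ne_zero.2 ha
  have h2 := myNorm hne
  have h3 := h2.comp μ h1
  have h4 : HasDerivAt (fun t : ℝ => Real.exp (-β * t)) (Real.exp (-β * ‖a - μ i‖) * (-β))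
      (‖a - μ i‖) := by simpa using HasDerivAt.exp ((hasDerivAt_id (‖a - μ i‖)).const_mul (-β))
  have h5 := h4.comp_hasFDerivAt μ h3
  refine h5.congr_fderiv ?_
  ext z
  have hCS : P z = z i := rfl
  simp only [ContinuousLinearMap.smul_apply, ContinuousLinearMap.comp_apply,
    ContinuousLinearMap.sub_apply, ContinuousLinearMap.zero_apply, innerSL_apply_apply, smul_eq_mul,
    hCS, zero_sub, inner_neg_right, ContinuousLinearMap.neg_apply]
  rw [div_eq_mul_inv]
  ring

set_option maxHeartbeats 4000000 in
/-- **Bound on the off-diagonal part of the soft-`k`-means Jacobian.**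
Let `x_1, …, x_n, μ_1, …, μ_K ∈ ℝ^p` with `x j ≠ μ k`, `β > 0`, soft assignments
`r μ' j k = exp (-β‖x j - μ' k‖) / ∑ ℓ, exp (-β‖x j - μ' ℓ‖)` (Euclidean norm),
and `f μ' i ℓ = μ' i ℓ - (∑ j, r μ' j i * x j ℓ) / (∑ j, r μ' j i)`.
Assume `‖x j‖₁ ≤ 1`; that `‖x j - μ i‖ - ‖x j - μ (c j)‖ ≥ δ` for all
`i ≠ c j`, where `c j` is the argmax of `r μ j ·`; and that
`∑ j, r μ j i ≥ α n` for all `i`.  Then the off-diagonal part `A = ∂f/∂μ - I`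
of the Jacobian satisfies `‖A‖₁ ≤ 2K²β exp (-βδ)/α`, where the operator
1-norm is the maximum over columns of the column's absolute sum. -/
theorem soft_kmeans_jacobian_offdiagonal_bound
    (n K p : ℕ)
    (x : Fin n → EuclideanSpace ℝ (Fin p))
    (μ : Fin K → EuclideanSpace ℝ (Fin p))
    (β δ α : ℝ) (hβ : 0 < β) (hδ : 0 < δ) (hα : 0 < α)
    (hxμ : ∀ j k, x j ≠ μ k)
    (r : (Fin K → EuclideanSpace ℝ (Fin p)) → Fin n → Fin K → ℝ)
    (hr : r = fun μ' j k =>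
      Real.exp (-β * ‖x j - μ' k‖) / ∑ ℓ, Real.exp (-β * ‖x j - μ' ℓ‖))
    (f : (Fin K → EuclideanSpace ℝ (Fin p)) → Fin K → Fin p → ℝ)
    (hf : f = fun μ' i ℓ =>
      μ' i ℓ - (∑ j, r μ' j i * x j ℓ) / (∑ j, r μ' j i))
    (hx1 : ∀ j, ∑ ℓ, |x j ℓ| ≤ 1)
    (c : Fin n → Fin K)
    (hc : ∀ j k, r μ j k ≤ r μ j (c j))
    (hsep : ∀ j i, i ≠ c j → ‖x j - μ i‖ - ‖x j - μ (c j)‖ ≥ δ)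
    (hbal : ∀ i, (∑ j, r μ j i) ≥ α * n)
    (A : Matrix (Fin K × Fin p) (Fin K × Fin p) ℝ)
    (hA : ∀ i ℓ k m, A (i, ℓ) (k, m) =
      fderiv ℝ (fun μ' => f μ' i ℓ) μ (Pi.single k (EuclideanSpace.single m 1))
        - (1 : Matrix (Fin K × Fin p) (Fin K × Fin p) ℝ) (i, ℓ) (k, m)) :
    ∀ col : Fin K × Fin p,
      ∑ row : Fin K × Fin p, |A row col| ≤
        2 * K ^ 2 * β * Real.exp (-β * δ) / α := by
  rintro ⟨k, m⟩
  haveI : Nonempty (Fin K) := ⟨k⟩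
  have hK1 : (1 : ℝ) ≤ K := by
    have := k.pos
    exact_mod_cast this
  have hRHS0 : 0 ≤ 2 * K ^ 2 * β * Real.exp (-β * δ) / α := by positivity
  -- the direction vector
  set v : Fin K → EuclideanSpace ℝ (Fin p) := Pi.single k (EuclideanSpace.single m 1) with hv
  -- basic quantities at the point μ
  set Ee : Fin n → Fin K → ℝ := fun j i => Real.exp (-β * ‖x j - μ i‖) with hEe
  set S : Fin n → ℝ := fun j => ∑ i, Ee j i with hS
  have hEpos : ∀ j i, 0 < Ee j i := fun j i => Real.exp_pos _
  have hSpos : ∀ j, 0 < S j := fun j => Finset.sum_pos (fun i _ => hEpos j i) univ_nonempty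
  have hrμ : ∀ j i, r μ j i = Ee j i / S j := by intro j i; rw [hr]
  have hrpos : ∀ j i, 0 < r μ j i := by
    intro j i; rw [hrμ]; exact div_pos (hEpos j i) (hSpos j)
  have hrle1 : ∀ j i, r μ j i ≤ 1 := by
    intro j i; rw [hrμ, div_le_one (hSpos j)]
    exact Finset.single_le_sum (fun i _ => (hEpos j i).le) (mem_univ i)
  have hsum1 : ∀ j, ∑ i, r μ j i = 1 := by
    intro j
    have : ∑ i, r μ j i = (∑ i, Ee j i) / S j := by
      rw [Finset.sum_div]; exact Finset.sum_congr rfl fun i _ => hrμ j i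
    have h2 : (∑ i, Ee j i) = S j := rfl
    rw [this, h2, div_self (hSpos j).ne']
  have hrsmall : ∀ j i, i ≠ c j → r μ j i ≤ Real.exp (-β * δ) := by
    intro j i hi
    have h1 : r μ j i ≤ Ee j i / Ee j (c j) := by
      rw [hrμ]
      apply div_le_div_of_nonneg_left (hEpos j i).le (hEpos j (c j))
      exact Finset.single_le_sum (fun i _ => (hEpos j i).le) (mem_univ (c j))
    have h2 : Ee j i / Ee j (c j) = Real.exp (-β * ‖x j - μ i‖ - -β * ‖x j - μ (c j)‖) := by
      rw [Real.exp_sub]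
    have h3 : -β * ‖x j - μ i‖ - -β * ‖x j - μ (c j)‖ ≤ -β * δ := by
      have := hsep j i hi
      nlinarith
    calc r μ j i ≤ Ee j i / Ee j (c j) := h1
      _ = Real.exp (-β * ‖x j - μ i‖ - -β * ‖x j - μ (c j)‖) := h2
      _ ≤ Real.exp (-β * δ) := Real.exp_le_exp.2 h3
  have honem : ∀ j, 1 - r μ j (c j) ≤ ((K : ℝ) - 1) * Real.exp (-β * δ) := by
    intro j
    have h1 : 1 - r μ j (c j) = ∑ i ∈ univ.erase (c j), r μ j i := by
      rw [← hsum1 j, ← Finset.add_sum_erase _ _ (mem_univ (c j))]; ring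
    rw [h1]
    calc ∑ i ∈ univ.erase (c j), r μ j i
        ≤ ∑ _i ∈ univ.erase (c j), Real.exp (-β * δ) :=
          Finset.sum_le_sum fun i hi => hrsmall j i (Finset.ne_of_mem_erase hi)
      _ = ((univ.erase (c j)).card : ℝ) * Real.exp (-β * δ) := by
          rw [Finset.sum_const, nsmul_eq_mul]
      _ = ((K : ℝ) - 1) * Real.exp (-β * δ) := by
          rw [Finset.card_erase_of_mem (mem_univ _), Finset.card_univ, Fintype.card_fin]
          congr 1
          have : 1 ≤ K := k.pos
          push_cast [Nat.cast_sub this]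
          ring
  -- the derivative of the exponential terms
  set G : Fin n → Fin K → (Fin K → EuclideanSpace ℝ (Fin p)) →L[ℝ] ℝ :=
    fun j i => (β * Ee j i / ‖x j - μ i‖) •
      ((innerSL ℝ (x j - μ i)).comp (ContinuousLinearMap.proj i)) with hG
  have hGd : ∀ j i, HasFDerivAt (fun μ' => Real.exp (-β * ‖x j - μ' i‖)) (G j i) μ :=
    fun j i => myExpNorm β (x j) μ i (hxμ j i)
  have hGv0 : ∀ j i, i ≠ k → G j i v = 0 := by
    intro j i hik
    simp only [hG, ContinuousLinearMap.smul_apply, ContinuousLinearMap.comp_apply,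
      innerSL_apply_apply, smul_eq_mul]
    have : v i = 0 := Pi.single_eq_of_ne hik _
    have hproj : (ContinuousLinearMap.proj i : (Fin K → EuclideanSpace ℝ (Fin p)) →L[ℝ]
        EuclideanSpace ℝ (Fin p)) v = v i := rfl
    rw [hproj, this, inner_zero_right, mul_zero]
  have hGvb : ∀ j i, |G j i v| ≤ β * Ee j i := by
    intro j i
    simp only [hG, ContinuousLinearMap.smul_apply, ContinuousLinearMap.comp_apply,
      innerSL_apply_apply, smul_eq_mul]
    have hproj : (ContinuousLinearMap.proj i : (Fin K → EuclideanSpace ℝ (Fin p)) →L[ℝ]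
        EuclideanSpace ℝ (Fin p)) v = v i := rfl
    rw [hproj]
    have hd : 0 < ‖x j - μ i‖ := norm_pos_iff.2 (sub_ne_zero.2 (hxμ j i))
    have hvi : ‖v i‖ ≤ 1 := by
      rcases eq_or_ne i k with h | h
      · subst h; rw [hv, Pi.single_eq_same, EuclideanSpace.norm_single, norm_one]
      · rw [hv, Pi.single_eq_of_ne h, norm_zero]; norm_num
    have hCS : |(inner ℝ (x j - μ i) (v i) : ℝ)| ≤ ‖x j - μ i‖ * 1 := by
      calc |(inner ℝ (x j - μ i) (v i) : ℝ)| ≤ ‖x j - μ i‖ * ‖v i‖ := abs_real_inner_le_norm _ _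
        _ ≤ ‖x j - μ i‖ * 1 := by gcongr
    rw [abs_mul]
    have hcoeff : |β * Ee j i / ‖x j - μ i‖| = β * Ee j i / ‖x j - μ i‖ := by
      rw [abs_of_nonneg]; positivity
    rw [hcoeff]
    calc β * Ee j i / ‖x j - μ i‖ * |(inner ℝ (x j - μ i) (v i) : ℝ)|
        ≤ β * Ee j i / ‖x j - μ i‖ * (‖x j - μ i‖ * 1) := by
          apply mul_le_mul_of_nonneg_left hCS; positivity
      _ = β * Ee j i := by field_simp
  -- derivative of the soft assignments
  set Dr : Fin n → Fin K → (Fin K → EuclideanSpace ℝ (Fin p)) →L[ℝ] ℝ :=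
    fun j i => (S j)⁻¹ • G j i - (Ee j i / (S j) ^ 2) • (∑ l, G j l) with hDrdef
  have hDr : ∀ j i, HasFDerivAt (fun μ' => r μ' j i) (Dr j i) μ := by
    intro j i
    rw [hr]
    exact myDiv (hGd j i) (HasFDerivAt.fun_sum fun l _ => hGd j l) (hSpos j).ne'
  -- directional derivative values
  set ρ : Fin n → Fin K → ℝ := fun j i => Dr j i v with hρdef
  have hsumGv : ∀ j, (∑ l, G j l) v = G j k v := by
    intro j
    rw [ContinuousLinearMap.sum_apply]
    exact Finset.sum_eq_single_of_mem k (mem_univ k) fun l _ hl => hGv0 j l hl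
  have hρval : ∀ j i, ρ j i = (G j i v) / S j - r μ j i * (G j k v) / S j := by
    intro j i
    have h1 : ρ j i = (S j)⁻¹ * (G j i v) - Ee j i / (S j) ^ 2 * ((∑ l, G j l) v) := rfl
    rw [h1, hsumGv j, hrμ]
    have hSj : S j ≠ 0 := (hSpos j).ne'
    generalize hs : S j = s at hSj ⊢
    generalize G j i v = a
    generalize G j k v = b
    generalize Ee j i = E₀
    field_simp
  -- the key pointwise bound on ρ
  have hErS : ∀ j i, Ee j i = r μ j i * S j := by
    intro j i; rw [hrμ, div_mul_cancel₀ _ (hSpos j).ne']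
  have halg : ∀ t u s e' : ℝ, s ≠ 0 → e' = u * s → t * (β * e') / s = β * (t * u) := by
    intro t u s e' hs he
    subst he
    field_simp
  have key1 : ∀ a e' Kr : ℝ, 0 < e' → 0 ≤ a → a ≤ 1 → 1 - a ≤ (Kr - 1) * e' → 1 ≤ Kr →
      β * ((1 - a) * a) ≤ β * e' * (Kr - 1) := by
    intro a e' Kr h1 h2 h3 h4 h5
    have q1 : (1 - a) * a ≤ (Kr - 1) * e' * a := mul_le_mul_of_nonneg_right h4 h2
    have q0 : 0 ≤ (Kr - 1) * e' := mul_nonneg (by linarith) h1.le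
    have q2 : (Kr - 1) * e' * a ≤ (Kr - 1) * e' * 1 := mul_le_mul_of_nonneg_left h3 q0
    nlinarith [mul_le_mul_of_nonneg_left (q1.trans q2) hβ.le]
  have key3 : ∀ a e' Kr : ℝ, 0 < e' → 0 ≤ a → a ≤ 1 → a ≤ e' → 2 ≤ Kr →
      β * ((1 - a) * a) ≤ β * e' * (Kr - 1) := by
    intro a e' Kr h1 h2 h3 h4 h5
    have q1 : (1 - a) * a ≤ 1 * a := mul_le_mul_of_nonneg_right (by linarith) h2
    have q2 : β * ((1 - a) * a) ≤ β * e' := by nlinarith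
    nlinarith [mul_nonneg hβ.le h1.le]
  have key2 : ∀ a b e' : ℝ, 0 ≤ a → 0 ≤ b → a * b ≤ e' →
      β * (a * b) ≤ β * e' * 1 := by
    intro a b e' h1 h2 h3
    nlinarith [mul_le_mul_of_nonneg_left h3 hβ.le]
  have hρb : ∀ j i, |ρ j i| ≤ β * Real.exp (-β * δ) * (if i = k then ((K : ℝ) - 1) else 1) := by
    intro j i
    have hexp0 : 0 < Real.exp (-β * δ) := Real.exp_pos _
    rw [hρval j i]
    by_cases hik : i = k
    · subst hik
      rw [if_pos rfl]
      have heq : G j i v / S j - r μ j i * G j i v / S j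
          = (1 - r μ j i) * G j i v / S j := by ring
      rw [heq]
      have h1 : 0 ≤ 1 - r μ j i := by linarith [hrle1 j i]
      have h2 : |(1 - r μ j i) * G j i v / S j| = (1 - r μ j i) * |G j i v| / S j := by
        rw [abs_div, abs_mul, abs_of_nonneg h1, abs_of_pos (hSpos j)]
      rw [h2]
      have h3 : (1 - r μ j i) * |G j i v| / S j ≤ (1 - r μ j i) * (β * Ee j i) / S j := by
        exact (div_le_div_iff_of_pos_right (hSpos j)).2 (mul_le_mul_of_nonneg_left (hGvb j i) h1)
      have h4 : (1 - r μ j i) * (β * Ee j i) / S j = β * ((1 - r μ j i) * r μ j i) :=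
        halg _ _ _ _ (hSpos j).ne' (hErS j i)
      rw [h4] at h3
      refine h3.trans ?_
      by_cases hck : i = c j
      · subst hck
        exact key1 _ _ _ hexp0 (hrpos j (c j)).le (hrle1 j (c j)) (honem j) hK1
      · have hK2 : (2 : ℝ) ≤ K := by
          have : 1 < Fintype.card (Fin K) := Fintype.one_lt_card_iff.mpr ⟨i, c j, hck⟩
          rw [Fintype.card_fin] at this
          exact_mod_cast this
        exact key3 _ _ _ hexp0 (hrpos j i).le (hrle1 j i) (hrsmall j i hck) hK2
    · rw [if_neg hik, hGv0 j i hik]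
      have heq : (0 : ℝ) / S j - r μ j i * G j k v / S j = -(r μ j i * G j k v / S j) := by ring
      rw [heq, abs_neg]
      have h2 : |r μ j i * G j k v / S j| = r μ j i * |G j k v| / S j := by
        rw [abs_div, abs_mul, abs_of_pos (hrpos j i), abs_of_pos (hSpos j)]
      rw [h2]
      have h3 : r μ j i * |G j k v| / S j ≤ r μ j i * (β * Ee j k) / S j := by
        exact (div_le_div_iff_of_pos_right (hSpos j)).2
          (mul_le_mul_of_nonneg_left (hGvb j k) (hrpos j i).le)
      have h4 : r μ j i * (β * Ee j k) / S j = β * (r μ j i * r μ j k) :=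
        halg _ _ _ _ (hSpos j).ne' (hErS j k)
      rw [h4] at h3
      refine h3.trans ?_
      by_cases hck : i = c j
      · have hkc : k ≠ c j := by rw [← hck]; exact fun h => hik h.symm
        refine key2 _ _ _ (hrpos j i).le (hrpos j k).le ?_
        nlinarith [hrsmall j k hkc, hrle1 j i, (hrpos j i).le, (hrpos j k).le,
          (Real.exp_pos (-β * δ)).le]
      · refine key2 _ _ _ (hrpos j i).le (hrpos j k).le ?_
        nlinarith [hrsmall j i hck, hrle1 j k, (hrpos j i).le, (hrpos j k).le,
          (Real.exp_pos (-β * δ)).le]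
  -- evaluation of the linear part
  set P : Fin K → Fin p → (Fin K → EuclideanSpace ℝ (Fin p)) →L[ℝ] ℝ :=
    fun i ℓ => (EuclideanSpace.proj ℓ).comp (ContinuousLinearMap.proj i) with hPdef
  have hPd : ∀ i ℓ, HasFDerivAt (fun μ' : Fin K → EuclideanSpace ℝ (Fin p) => μ' i ℓ)
      (P i ℓ) μ := fun i ℓ => (P i ℓ).hasFDerivAt
  have hPv : ∀ i ℓ, P i ℓ v = (1 : Matrix (Fin K × Fin p) (Fin K × Fin p) ℝ) (i, ℓ) (k, m) := by
    intro i ℓ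
    have h0 : P i ℓ v = v i ℓ := rfl
    rw [h0, Matrix.one_apply]
    by_cases hik : i = k
    · subst hik
      rw [hv]
      rw [Pi.single_eq_same, EuclideanSpace.single_apply]
      by_cases hlm : ℓ = m
      · subst hlm; simp
      · simp [hlm, Prod.ext_iff]
    · rw [hv, Pi.single_eq_of_ne hik]
      simp [Prod.ext_iff, hik]
  have hexp0 : 0 < Real.exp (-β * δ) := Real.exp_pos _
  set q : Fin K → ℝ := fun i => β * Real.exp (-β * δ) * (if i = k then ((K : ℝ) - 1) else 1)
    with hqdef
  have hq0 : ∀ i, 0 ≤ q i := by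
    intro i
    have : (0:ℝ) ≤ (if i = k then ((K : ℝ) - 1) else 1) := by
      split
      · linarith
      · norm_num
    have hb : 0 ≤ β * Real.exp (-β * δ) := by positivity
    exact mul_nonneg hb this
  have hqsum : ∑ i, q i = 2 * ((K : ℝ) - 1) * (β * Real.exp (-β * δ)) := by
    rw [← Finset.add_sum_erase _ _ (mem_univ k)]
    have h1 : q k = β * Real.exp (-β * δ) * ((K : ℝ) - 1) := by rw [hqdef]; simp
    have h2 : ∑ i ∈ univ.erase k, q i = ((K : ℝ) - 1) * (β * Real.exp (-β * δ)) := by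
      have : ∀ i ∈ univ.erase k, q i = β * Real.exp (-β * δ) := by
        intro i hi
        rw [hqdef]
        simp [Finset.ne_of_mem_erase hi]
      rw [Finset.sum_congr rfl this, Finset.sum_const, nsmul_eq_mul,
        Finset.card_erase_of_mem (mem_univ _), Finset.card_univ, Fintype.card_fin]
      have hK : 1 ≤ K := k.pos
      push_cast [Nat.cast_sub hK]
      ring
    rw [h1, h2]
    ring
  rcases Nat.eq_zero_or_pos n with hn | hn
  · -- degenerate case : no data points
    subst hn
    have hzero : ∀ i ℓ, A (i, ℓ) (k, m) = 0 := by
      intro i ℓ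
      rw [hA i ℓ k m]
      have hfun : (fun μ' => f μ' i ℓ)
          = fun μ' : Fin K → EuclideanSpace ℝ (Fin p) => μ' i ℓ := by
        funext μ'
        rw [hf]
        simp
      rw [hfun, (hPd i ℓ).fderiv, hPv i ℓ, sub_self]
    have : ∑ row : Fin K × Fin p, |A row (k, m)| = 0 := by
      apply Finset.sum_eq_zero
      rintro ⟨i, ℓ⟩ _
      rw [hzero i ℓ, abs_zero]
    rw [this]
    exact hRHS0
  -- main case
  have hn1 : (1 : ℝ) ≤ n := by exact_mod_cast hn
  have hRpos : ∀ i, 0 < ∑ j, r μ j i :=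
    fun i => Finset.sum_pos (fun j _ => hrpos j i) ⟨⟨0, hn⟩, mem_univ _⟩
  have hfd : ∀ i ℓ, HasFDerivAt (fun μ' => f μ' i ℓ)
      (P i ℓ - ((∑ j, r μ j i)⁻¹ • (∑ j, x j ℓ • Dr j i)
        - ((∑ j, r μ j i * x j ℓ) / (∑ j, r μ j i) ^ 2) • (∑ j, Dr j i))) μ := by
    intro i ℓ
    rw [hf]
    exact (hPd i ℓ).sub (myDiv (HasFDerivAt.fun_sum fun j _ => (hDr j i).mul_const (x j ℓ))
      (HasFDerivAt.fun_sum fun j _ => hDr j i) (hRpos i).ne')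
  have hAv : ∀ i ℓ, A (i, ℓ) (k, m)
      = -((∑ j, r μ j i)⁻¹ * (∑ j, x j ℓ * ρ j i)
        - (∑ j, r μ j i * x j ℓ) / (∑ j, r μ j i) ^ 2 * (∑ j, ρ j i)) := by
    intro i ℓ
    rw [hA i ℓ k m, (hfd i ℓ).fderiv, ← hv]
    have hρ' : ∀ j i, Dr j i v = ρ j i := fun _ _ => rfl
    simp only [ContinuousLinearMap.sub_apply, ContinuousLinearMap.smul_apply,
      ContinuousLinearMap.sum_apply, smul_eq_mul, hρ', hPv i ℓ]
    ring
  -- column bound for each cluster i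
  have hcol : ∀ i, (∑ ℓ, |A (i, ℓ) (k, m)|) ≤ 2 * q i / α := by
    intro i
    have hRi := hRpos i
    have hRα : α * n ≤ ∑ j, r μ j i := hbal i
    -- T1 : derivative numerator bound
    have hT1 : (∑ ℓ, |∑ j, x j ℓ * ρ j i|) ≤ n * q i := by
      calc (∑ ℓ, |∑ j, x j ℓ * ρ j i|)
          ≤ ∑ ℓ, ∑ j, |x j ℓ| * |ρ j i| := by
            refine Finset.sum_le_sum fun ℓ _ => ?_
            refine (Finset.abs_sum_le_sum_abs _ _).trans ?_
            refine Finset.sum_le_sum fun j _ => ?_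
            rw [abs_mul]
        _ = ∑ j, (∑ ℓ, |x j ℓ|) * |ρ j i| := by
            rw [Finset.sum_comm]
            exact Finset.sum_congr rfl fun j _ => (Finset.sum_mul _ _ _).symm
        _ ≤ ∑ j : Fin n, q i := by
            refine Finset.sum_le_sum fun j _ => ?_
            calc (∑ ℓ, |x j ℓ|) * |ρ j i| ≤ 1 * |ρ j i| :=
                mul_le_mul_of_nonneg_right (hx1 j) (abs_nonneg _)
              _ = |ρ j i| := one_mul _
              _ ≤ q i := hρb j i
        _ = n * q i := by rw [Finset.sum_const, nsmul_eq_mul, Finset.card_univ, Fintype.card_fin]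
    -- T2 : numerator bound
    have hT2 : (∑ ℓ, |∑ j, r μ j i * x j ℓ|) ≤ ∑ j, r μ j i := by
      calc (∑ ℓ, |∑ j, r μ j i * x j ℓ|)
          ≤ ∑ ℓ, ∑ j, r μ j i * |x j ℓ| := by
            refine Finset.sum_le_sum fun ℓ _ => ?_
            refine (Finset.abs_sum_le_sum_abs _ _).trans ?_
            refine Finset.sum_le_sum fun j _ => ?_
            rw [abs_mul, abs_of_pos (hrpos j i)]
        _ = ∑ j, r μ j i * (∑ ℓ, |x j ℓ|) := by
            rw [Finset.sum_comm]
            exact Finset.sum_congr rfl fun j _ => (Finset.mul_sum _ _ _).symm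
        _ ≤ ∑ j, r μ j i * 1 := by
            refine Finset.sum_le_sum fun j _ => ?_
            exact mul_le_mul_of_nonneg_left (hx1 j) (hrpos j i).le
        _ = ∑ j, r μ j i := by simp
    -- T3 : sum of derivatives bound
    have hT3 : |∑ j, ρ j i| ≤ n * q i := by
      refine (Finset.abs_sum_le_sum_abs _ _).trans ?_
      calc (∑ j, |ρ j i|) ≤ ∑ j : Fin n, q i := Finset.sum_le_sum fun j _ => hρb j i
        _ = n * q i := by rw [Finset.sum_const, nsmul_eq_mul, Finset.card_univ, Fintype.card_fin]
    -- assemble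
    calc (∑ ℓ, |A (i, ℓ) (k, m)|)
        ≤ ∑ ℓ, (|∑ j, x j ℓ * ρ j i| / (∑ j, r μ j i)
            + |∑ j, r μ j i * x j ℓ| * |∑ j, ρ j i| / (∑ j, r μ j i) ^ 2) := by
          refine Finset.sum_le_sum fun ℓ _ => ?_
          rw [hAv i ℓ, abs_neg]
          refine (abs_sub _ _).trans ?_
          gcongr
          · rw [abs_mul, abs_of_pos (inv_pos.2 hRi), inv_mul_eq_div]
          · rw [abs_mul, abs_div, abs_of_pos (pow_pos hRi 2)]
            rw [div_mul_eq_mul_div]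
      _ = (∑ ℓ, |∑ j, x j ℓ * ρ j i|) / (∑ j, r μ j i)
            + (∑ ℓ, |∑ j, r μ j i * x j ℓ|) * |∑ j, ρ j i| / (∑ j, r μ j i) ^ 2 := by
          rw [Finset.sum_add_distrib]
          congr 1
          · rw [← Finset.sum_div]
          · rw [← Finset.sum_div, ← Finset.sum_mul]
      _ ≤ (n * q i) / (∑ j, r μ j i)
            + (∑ j, r μ j i) * (n * q i) / (∑ j, r μ j i) ^ 2 := by
          have u1 : (∑ ℓ, |∑ j, x j ℓ * ρ j i|) / (∑ j, r μ j i)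
              ≤ (n * q i) / (∑ j, r μ j i) := (div_le_div_iff_of_pos_right hRi).2 hT1
          have u2 : (∑ ℓ, |∑ j, r μ j i * x j ℓ|) * |∑ j, ρ j i|
              ≤ (∑ j, r μ j i) * (n * q i) :=
            mul_le_mul hT2 hT3 (abs_nonneg _) hRi.le
          have u3 : (∑ ℓ, |∑ j, r μ j i * x j ℓ|) * |∑ j, ρ j i| / (∑ j, r μ j i) ^ 2
              ≤ (∑ j, r μ j i) * (n * q i) / (∑ j, r μ j i) ^ 2 :=
            (div_le_div_iff_of_pos_right (pow_pos hRi 2)).2 u2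
          exact add_le_add u1 u3
      _ = 2 * ((n * q i) / (∑ j, r μ j i)) := by
          have hz : (∑ j, r μ j i) ≠ 0 := hRi.ne'
          generalize hgen : (∑ j, r μ j i) = Rg at hz ⊢
          field_simp
          ring
      _ ≤ 2 * ((n * q i) / (α * n)) := by
          have hnum : 0 ≤ (n : ℝ) * q i := mul_nonneg (by positivity) (hq0 i)
          have hden : 0 < α * n := by positivity
          have := div_le_div_of_nonneg_left hnum hden hRα
          linarith
      _ = 2 * q i / α := by
          have hnz : (n : ℝ) ≠ 0 := by positivity
          field_simp
  -- sum over all clusters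
  calc (∑ row : Fin K × Fin p, |A row (k, m)|)
      = ∑ i, ∑ ℓ, |A (i, ℓ) (k, m)| := Fintype.sum_prod_type _
    _ ≤ ∑ i, 2 * q i / α := Finset.sum_le_sum fun i _ => hcol i
    _ = 2 * (∑ i, q i) / α := by rw [← Finset.sum_div, ← Finset.mul_sum]
    _ = 4 * ((K : ℝ) - 1) * (β * Real.exp (-β * δ)) / α := by rw [hqsum]; ring
    _ ≤ 2 * K ^ 2 * β * Real.exp (-β * δ) / α := by
        rw [div_le_div_iff₀ hα hα]
        have hb : 0 < β * Real.exp (-β * δ) := by positivity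
        nlinarith [sq_nonneg ((K : ℝ) - 1), mul_pos hb hα]
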